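/- arXiv:2503.18443 — 3 statements merged into one kernel-verified Lean document; each statement's English description precedes it below -/
import Mathlib

section
/- Under the standing assumptions, the quadratic Q(m) = (κ²/2)m² + (δ − r − κ²/2)m − δ has exactly two real roots m₁ and m₂, and they satisfy m₁ > 1 and m₂ < min(γ*, 0), where γ* = (γ−1)/γ; in particular m₂ < γ* < m₁. -/
/-- Under the standing assumptions, the quadratic
`Q(m) = (κ²/2)m² + (δ − r − κ²/2)m − δ` has exactly two real roots `m₁` and `m₂`,
with `m₁ > 1` and `m₂ < min(γ*, 0)` where `γ* = (γ−1)/γ`; in particular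
`m₂ < γ* < m₁`. -/
theorem quadratic_two_roots (r δ κ γ : ℝ)
    (hr : 0 < r) (hδ : 0 < δ) (hκ : 0 < κ) (hγ : 0 < γ) (hγ1 : γ ≠ 1)
    (hK : 0 < r + (δ - r) / γ + ((γ - 1) / (2 * γ ^ 2)) * κ ^ 2) :
    ∃ m₁ m₂ : ℝ, m₁ ≠ m₂ ∧
      (∀ m : ℝ, κ ^ 2 / 2 * m ^ 2 + (δ - r - κ ^ 2 / 2) * m - δ = 0 ↔ m = m₁ ∨ m = m₂) ∧
      1 < m₁ ∧ m₂ < min ((γ - 1) / γ) 0 ∧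
      m₂ < (γ - 1) / γ ∧ (γ - 1) / γ < m₁ := by
  have ha : (0:ℝ) < κ^2/2 := by positivity
  set a : ℝ := κ^2/2 with ha_def
  set b : ℝ := δ - r - κ^2/2 with hb_def
  have hD : (0:ℝ) < b^2 + 2*κ^2*δ := by positivity
  set s : ℝ := Real.sqrt (b^2 + 2*κ^2*δ) with hs_def
  have hs2 : s^2 = b^2 + 2*κ^2*δ := Real.sq_sqrt hD.le
  have hs : 0 < s := Real.sqrt_pos.mpr hD
  set m₁ : ℝ := (-b + s)/(2*a) with hm1_def
  set m₂ : ℝ := (-b - s)/(2*a) with hm2_def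
  have h2a : (0:ℝ) < 2*a := by positivity
  have hlt : m₂ < m₁ :=
    (div_lt_div_iff_of_pos_right h2a).mpr (by linarith)
  -- factorization
  have key : ∀ m : ℝ, a * m^2 + b * m - δ = a * (m - m₁) * (m - m₂) := by
    intro m
    rw [hm1_def, hm2_def]
    field_simp
    rw [ha_def]
    linear_combination hs2
  -- between lemma
  have between : ∀ x : ℝ, a * x^2 + b * x - δ < 0 → m₂ < x ∧ x < m₁ := by
    intro x hx
    rw [key x] at hx
    constructor
    · by_contra h
      push_neg at h
      have h1 : 0 ≤ m₁ - x := by linarith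
      have h2 : 0 ≤ m₂ - x := by linarith
      nlinarith [mul_nonneg ha.le (mul_nonneg h1 h2)]
    · by_contra h
      push_neg at h
      have h1 : 0 ≤ x - m₁ := by linarith
      have h2 : 0 ≤ x - m₂ := by linarith
      nlinarith [mul_nonneg ha.le (mul_nonneg h1 h2)]
  have hγ0 : γ ≠ 0 := ne_of_gt hγ
  have hQg : a * ((γ-1)/γ)^2 + b * ((γ-1)/γ) - δ < 0 := by
    have heq : a * ((γ-1)/γ)^2 + b * ((γ-1)/γ) - δ
        = -(r + (δ - r) / γ + ((γ - 1) / (2 * γ ^ 2)) * κ ^ 2) := by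
      rw [ha_def, hb_def]; field_simp; ring
    rw [heq]; linarith
  have hQ1 : a * (1:ℝ)^2 + b * 1 - δ < 0 := by rw [hb_def]; nlinarith
  have hQ0 : a * (0:ℝ)^2 + b * 0 - δ < 0 := by nlinarith
  obtain ⟨hg2, hg1⟩ := between _ hQg
  obtain ⟨h12, h11⟩ := between _ hQ1
  obtain ⟨h02, h01⟩ := between _ hQ0
  refine ⟨m₁, m₂, ne_of_gt hlt, ?_, h11, lt_min hg2 h02, hg2, hg1⟩
  intro m
  have : κ ^ 2 / 2 * m ^ 2 + (δ - r - κ ^ 2 / 2) * m - δ = a * (m - m₁) * (m - m₂) := key m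
  rw [this]
  constructor
  · intro h
    rcases mul_eq_zero.mp h with h' | h'
    · rcases mul_eq_zero.mp h' with h'' | h''
      · exact absurd h'' (ne_of_gt ha)
      · exact Or.inl (by linarith [sub_eq_zero.mp h''])
    · exact Or.inr (by linarith [sub_eq_zero.mp h'])
  · rintro (rfl | rfl) <;> ring
end

section
/- For every β ≥ 0, the function φ_β(z) = (2/(κ² m₂(m₂−1))) z^{m₂} + (z/r)(m₁−1) − m₁(β + 1/δ) is strictly increasing on (1,∞), satisfies φ_β(1+βδ) ≤ 0 and φ_β(z) → +∞ as z → +∞, and consequently φ_β has a unique zero z_β in [1+βδ, ∞). -/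
/-- The function `φ_β(z) = (2/(κ² m₂(m₂−1))) z^{m₂} + (z/r)(m₁−1) − m₁(β + 1/δ)`. -/
noncomputable def phiB (r δ κ m₁ m₂ β : ℝ) (z : ℝ) : ℝ :=
  2 / (κ ^ 2 * m₂ * (m₂ - 1)) * z ^ m₂ + z / r * (m₁ - 1) - m₁ * (β + 1 / δ)

set_option maxHeartbeats 1000000

/-- For every `β ≥ 0`, the function `φ_β` is strictly increasing on
`(1,∞)`, satisfies `φ_β(1+βδ) ≤ 0` and `φ_β(z) → +∞` as `z → +∞`, and consequently
`φ_β` has a unique zero `z_β` in `[1+βδ, ∞)`. -/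
theorem phiB_unique_zero (r δ κ γ m₁ m₂ β : ℝ)
    (hr : 0 < r) (hδ : 0 < δ) (hκ : 0 < κ) (hγ : 0 < γ) (hγ1 : γ ≠ 1)
    (hK : 0 < r + (δ - r) / γ + ((γ - 1) / (2 * γ ^ 2)) * κ ^ 2)
    (hQ1 : κ ^ 2 / 2 * m₁ ^ 2 + (δ - r - κ ^ 2 / 2) * m₁ - δ = 0)
    (hQ2 : κ ^ 2 / 2 * m₂ ^ 2 + (δ - r - κ ^ 2 / 2) * m₂ - δ = 0)
    (hm1 : 1 < m₁) (hm2 : m₂ < min ((γ - 1) / γ) 0)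
    (hβ : 0 ≤ β) :
    StrictMonoOn (phiB r δ κ m₁ m₂ β) (Set.Ioi 1) ∧
    phiB r δ κ m₁ m₂ β (1 + β * δ) ≤ 0 ∧
    Filter.Tendsto (phiB r δ κ m₁ m₂ β) Filter.atTop Filter.atTop ∧
    (∃! z : ℝ, z ∈ Set.Ici (1 + β * δ) ∧ phiB r δ κ m₁ m₂ β z = 0) := by
  have hm2_0 : m₂ < 0 := lt_of_lt_of_le hm2 (min_le_right _ _)
  have hm2_1 : m₂ - 1 < 0 := by linarith
  have hS : κ^2/2 * (m₁ + m₂) = r + κ^2/2 - δ := by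
    have key : (κ^2/2 * (m₁ + m₂) - (r + κ^2/2 - δ)) * (m₁ - m₂) = 0 := by
      linear_combination hQ1 - hQ2
    rcases mul_eq_zero.mp key with h | h
    · linarith
    · exfalso; nlinarith
  have hP : κ^2/2 * (m₁ * m₂) = -δ := by linear_combination m₁ * hS - hQ1
  have hr_eq : r = κ^2/2 * (m₁-1)*(1-m₂) := by linear_combination -hS + hP
  have hκ2 : (0:ℝ) < κ^2 := by positivity
  have hden : 0 < κ ^ 2 * m₂ * (m₂ - 1) := by nlinarith
  have hκ' : (κ:ℝ) ≠ 0 := hκ.ne'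
  have hr' : r ≠ 0 := hr.ne'
  have hδ' : δ ≠ 0 := hδ.ne'
  have hm2' : m₂ ≠ 0 := hm2_0.ne
  have hm21' : m₂ - 1 ≠ 0 := hm2_1.ne
  have hm1' : m₁ - 1 ≠ 0 := ne_of_gt (by linarith)
  set c : ℝ := 2 / (κ ^ 2 * m₂ * (m₂ - 1)) with hc
  set A : ℝ := (m₁ - 1) / r with hA
  clear_value c A
  have hc_pos : 0 < c := by rw [hc]; exact div_pos two_pos hden
  have hA_pos : 0 < A := by rw [hA]; exact div_pos (by linarith) hr
  have hphi : phiB r δ κ m₁ m₂ β =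
      fun x : ℝ => c * x ^ m₂ + x / r * (m₁ - 1) - m₁ * (β + 1 / δ) := by
    funext x; simp only [phiB, hc]
  have hcm : c * m₂ = -A := by
    rw [hc, hA]
    field_simp
    linear_combination 2 * hr_eq
  have hm1_eq : m₁ = δ * A + δ * c := by
    rw [hA, hc]
    field_simp
    linear_combination (2*r*(m₂-1)) * hP + (2*δ*(1-m₂) - 2*δ) * hr_eq
  -- derivative
  have hd : ∀ z : ℝ, 0 < z →
      HasDerivAt (phiB r δ κ m₁ m₂ β) (c * (m₂ * z ^ (m₂-1)) + A) z := by
    intro z hz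
    rw [hphi]
    have h1 : HasDerivAt (fun x : ℝ => x ^ m₂) (m₂ * z ^ (m₂-1)) z :=
      Real.hasDerivAt_rpow_const (Or.inl hz.ne')
    have h2 := h1.const_mul c
    have h3 : HasDerivAt (fun x : ℝ => x / r * (m₁-1)) A z := by
      have h : HasDerivAt (fun x : ℝ => x * ((m₁-1)/r)) ((m₁-1)/r) z := by
        simpa using (hasDerivAt_id z).mul_const ((m₁-1)/r)
      have he : (fun x : ℝ => x * ((m₁-1)/r)) = fun x : ℝ => x / r * (m₁-1) := by
        funext x; ring
      rw [he] at h
      rw [hA]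
      exact h
    exact (h2.add h3).sub_const (m₁ * (β + 1/δ))
  have hderiv_pos : ∀ z : ℝ, 1 < z → 0 < c * (m₂ * z ^ (m₂-1)) + A := by
    intro z hz
    have hlt : z ^ (m₂-1) < 1 := Real.rpow_lt_one_of_one_lt_of_neg hz hm2_1
    have hge : 0 < z ^ (m₂-1) := Real.rpow_pos_of_pos (by linarith) _
    have h : c * (m₂ * z ^ (m₂-1)) = -(A * z ^ (m₂-1)) := by
      rw [← mul_assoc, hcm]; ring
    rw [h]
    nlinarith
  have hmono : StrictMonoOn (phiB r δ κ m₁ m₂ β) (Set.Ici 1) := by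
    apply strictMonoOn_of_deriv_pos (convex_Ici 1)
    · intro z hz
      exact ((hd z (lt_of_lt_of_le one_pos hz)).continuousAt).continuousWithinAt
    · intro z hz
      rw [interior_Ici] at hz
      rw [(hd z (lt_trans one_pos hz)).deriv]
      exact hderiv_pos z hz
  have hmonoIoi : StrictMonoOn (phiB r δ κ m₁ m₂ β) (Set.Ioi 1) :=
    hmono.mono Set.Ioi_subset_Ici_self
  -- value at 1+βδ
  have hw1 : (1:ℝ) ≤ 1 + β * δ := by nlinarith
  have hval : phiB r δ κ m₁ m₂ β (1 + β*δ) = c*((1+β*δ)^m₂ - 1) - β*δ*c := by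
    rw [hphi]
    show c * (1+β*δ)^m₂ + (1+β*δ)/r*(m₁-1) - m₁*(β+1/δ) = _
    have hAr : (1+β*δ)/r*(m₁-1) = (1+β*δ) * A := by rw [hA]; ring
    rw [hAr, hm1_eq]
    field_simp
    ring
  have hle : phiB r δ κ m₁ m₂ β (1 + β*δ) ≤ 0 := by
    rw [hval]
    have h1 : (1+β*δ) ^ m₂ ≤ 1 :=
      Real.rpow_le_one_of_one_le_of_nonpos hw1 hm2_0.le
    have t1 : c * ((1+β*δ)^m₂ - 1) ≤ 0 :=
      mul_nonpos_iff.mpr (Or.inl ⟨hc_pos.le, by linarith⟩)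
    linarith [mul_nonneg (mul_nonneg hβ hδ.le) hc_pos.le]
  -- tendsto
  have htop : Filter.Tendsto (phiB r δ κ m₁ m₂ β) Filter.atTop Filter.atTop := by
    rw [hphi]
    have h0 : Filter.Tendsto (fun x : ℝ => x ^ m₂) Filter.atTop (nhds 0) := by
      have := tendsto_rpow_neg_atTop (y := -m₂) (by linarith)
      simpa using this
    have h1 : Filter.Tendsto (fun z : ℝ => c * z ^ m₂) Filter.atTop (nhds (c * 0)) :=
      h0.const_mul c
    have h2 : Filter.Tendsto (fun z : ℝ => z / r * (m₁-1)) Filter.atTop Filter.atTop :=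
      (Filter.tendsto_id.atTop_div_const hr).atTop_mul_const (by linarith)
    have h3 := h1.add_atTop h2
    simpa [sub_eq_add_neg] using
      Filter.tendsto_atTop_add_const_right Filter.atTop (-(m₁ * (β + 1/δ))) h3
  -- unique zero
  refine ⟨hmonoIoi, hle, htop, ?_⟩
  obtain ⟨b, hb⟩ := ((htop.eventually_ge_atTop 1).and (Filter.eventually_ge_atTop (1+β*δ))).exists
  have hwb : 1 + β*δ ≤ b := hb.2
  have hfb : (0:ℝ) ≤ phiB r δ κ m₁ m₂ β b := by linarith [hb.1]
  have hcont : ContinuousOn (phiB r δ κ m₁ m₂ β) (Set.Icc (1+β*δ) b) := by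
    intro z hz
    exact ((hd z (by linarith [hz.1])).continuousAt).continuousWithinAt
  obtain ⟨z, hz, hz0⟩ := intermediate_value_Icc hwb hcont ⟨hle, hfb⟩
  refine ⟨z, ⟨hz.1, hz0⟩, ?_⟩
  rintro y ⟨hy, hy0⟩
  exact hmono.injOn (Set.mem_of_mem_of_subset hy (Set.Ici_subset_Ici.mpr hw1))
    (Set.mem_of_mem_of_subset hz.1 (Set.Ici_subset_Ici.mpr hw1)) (by rw [hy0, hz0])
end

section
/- For every h > 0 one has C₂(h) > 0 and C₅(h) > 0. -/
/-- Coefficient `C₂(h)`. -/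
noncomputable def C2 (r δ κ γ m₁ m₂ α zα : ℝ) (h : ℝ) : ℝ :=
  (1 - (γ - 1) / γ) / ((m₁ - m₂) * (m₂ - (γ - 1) / γ)) *
    (m₁ * (α * δ - 1) / δ * zα ^ (-m₂) + (m₁ - 1) / r * zα ^ (1 - m₂)) *
    h ^ (1 + γ * (m₂ - 1))

/-- Coefficient `C₅(h)`. -/
noncomputable def C5 (r δ κ γ m₁ m₂ β zβ : ℝ) (h : ℝ) : ℝ :=
  (1 - (γ - 1) / γ) / ((m₁ - m₂) * (m₁ - (γ - 1) / γ)) *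
    (m₂ * (β * δ + 1) / δ * zβ ^ (-m₁) + (1 - m₂) / r * zβ ^ (1 - m₁)) *
    h ^ (1 + γ * (m₁ - 1))

/-- Coefficient `C₃(h)`. -/
noncomputable def C3 (r δ κ γ m₁ m₂ β zβ : ℝ) (h : ℝ) : ℝ :=
  C5 r δ κ γ m₁ m₂ β zβ h +
    2 * ((γ - 1) / γ - 1) / (κ ^ 2 * (m₁ - m₂) * m₁ * (m₁ - 1) * (m₁ - (γ - 1) / γ)) *
      h ^ (1 + γ * (m₁ - 1))

/-- Coefficient `C₄(h)`. -/
noncomputable def C4 (r δ κ γ m₁ m₂ α zα : ℝ) (h : ℝ) : ℝ :=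
  C2 r δ κ γ m₁ m₂ α zα h -
    2 * ((γ - 1) / γ - 1) / (κ ^ 2 * (m₁ - m₂) * m₂ * (m₂ - 1) * (m₂ - (γ - 1) / γ)) *
      h ^ (1 + γ * (m₂ - 1))

/-- Coefficient `C₁(h₁,h₂)`. -/
noncomputable def C1 (r δ κ γ m₁ m₂ β zβ : ℝ) (h₁ h₂ : ℝ) : ℝ :=
  C3 r δ κ γ m₁ m₂ β zβ h₂ +
    2 * (1 - (γ - 1) / γ) / (κ ^ 2 * (m₁ - m₂) * m₁ * (m₁ - 1) * (m₁ - (γ - 1) / γ)) *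
      h₁ ^ (1 + γ * (m₁ - 1))

/-- Coefficient `C₆(h₁,h₂)`. -/
noncomputable def C6 (r δ κ γ m₁ m₂ α zα : ℝ) (h₁ h₂ : ℝ) : ℝ :=
  C4 r δ κ γ m₁ m₂ α zα h₁ -
    2 * (1 - (γ - 1) / γ) / (κ ^ 2 * (m₁ - m₂) * m₂ * (m₂ - 1) * (m₂ - (γ - 1) / γ)) *
      h₂ ^ (1 + γ * (m₂ - 1))

set_option maxHeartbeats 1000000 in
/-- For every `h > 0` one has `C₂(h) > 0` and `C₅(h) > 0`. -/
theorem C2_C5_pos (r δ κ γ m₁ m₂ α β zα zβ : ℝ)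
    (hr : 0 < r) (hδ : 0 < δ) (hκ : 0 < κ) (hγ : 0 < γ) (hγ1 : γ ≠ 1)
    (hK : 0 < r + (δ - r) / γ + ((γ - 1) / (2 * γ ^ 2)) * κ ^ 2)
    (hQ1 : κ ^ 2 / 2 * m₁ ^ 2 + (δ - r - κ ^ 2 / 2) * m₁ - δ = 0)
    (hQ2 : κ ^ 2 / 2 * m₂ ^ 2 + (δ - r - κ ^ 2 / 2) * m₂ - δ = 0)
    (hm1 : 1 < m₁) (hm2 : m₂ < min ((γ - 1) / γ) 0)
    (hα : 0 ≤ α) (hα' : α < 1 / δ) (hβ : 0 ≤ β)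
    (hzα : zα ∈ Set.Ioc 0 (1 - α * δ))
    (hzαeq : 2 / (κ ^ 2 * m₁ * (m₁ - 1)) * zα ^ m₁ + zα / r * (m₂ - 1) + m₂ * (α - 1 / δ) = 0)
    (hzβ : zβ ∈ Set.Ici (1 + β * δ))
    (hzβeq : 2 / (κ ^ 2 * m₂ * (m₂ - 1)) * zβ ^ m₂ + zβ / r * (m₁ - 1) - m₁ * (β + 1 / δ) = 0)
    :
    ∀ h : ℝ, 0 < h →
      0 < C2 r δ κ γ m₁ m₂ α zα h ∧ 0 < C5 r δ κ γ m₁ m₂ β zβ h := by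

  intro h hh
  obtain ⟨hzα0, hzα1⟩ := hzα
  have hzβ' : 1 + β * δ ≤ zβ := hzβ
  have hm2γ : m₂ < (γ - 1) / γ := lt_of_lt_of_le hm2 (min_le_left _ _)
  have hm20 : m₂ < 0 := lt_of_lt_of_le hm2 (min_le_right _ _)
  have hγne : γ ≠ 0 := ne_of_gt hγ
  have h1γ : 1 - (γ - 1) / γ = 1 / γ := by field_simp; ring
  have h1γpos : (0:ℝ) < 1 - (γ - 1) / γ := by rw [h1γ]; positivity
  have hγstar1 : (γ - 1) / γ < 1 := by rw [div_lt_one hγ]; linarith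
  have hm12 : m₂ < m₁ := by linarith
  have hβδ : (0:ℝ) < 1 + β * δ := by nlinarith
  have hzβpos : (0:ℝ) < zβ := lt_of_lt_of_le hβδ hzβ'
  have hαδ : α * δ < 1 := (lt_div_iff₀ hδ).mp hα'
  have key1 : δ * (m₁ - 1) < r * m₁ := by
    have hp : 0 < κ ^ 2 * (m₁ * (m₁ - 1)) :=
      mul_pos (pow_pos hκ 2) (mul_pos (by linarith) (by linarith))
    nlinarith [hQ1, hp]
  have key2 : 0 < δ * (1 - m₂) + r * m₂ := by
    have hp : 0 < κ ^ 2 * (m₂ * (m₂ - 1)) :=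
      mul_pos (pow_pos hκ 2) (mul_pos_of_neg_of_neg hm20 (by linarith))
    nlinarith [hQ2, hp]
  constructor
  · -- C2 positive
    unfold C2
    have hrw : zα ^ (1 - m₂) = zα * zα ^ (-m₂) := by
      rw [show (1:ℝ) - m₂ = 1 + (-m₂) by ring, Real.rpow_add hzα0, Real.rpow_one]
    have hnum : m₁ * (α * δ - 1) * r + (m₁ - 1) * zα * δ < 0 := by
      have h1 : (m₁ - 1) * δ * zα ≤ (m₁ - 1) * δ * (1 - α * δ) := by
        have : (0:ℝ) ≤ (m₁ - 1) * δ := mul_nonneg (by linarith) hδ.le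
        exact mul_le_mul_of_nonneg_left hzα1 this
      have h2 : (1 - α * δ) * (δ * (m₁ - 1)) < (1 - α * δ) * (r * m₁) := by
        have : (0:ℝ) < 1 - α * δ := by linarith
        exact mul_lt_mul_of_pos_left key1 this
      nlinarith [h1, h2]
    have hinner : m₁ * (α * δ - 1) / δ + (m₁ - 1) / r * zα < 0 := by
      have heq : m₁ * (α * δ - 1) / δ + (m₁ - 1) / r * zα
          = (m₁ * (α * δ - 1) * r + (m₁ - 1) * zα * δ) / (δ * r) := by
        field_simp
      rw [heq]
      exact div_neg_of_neg_of_pos hnum (mul_pos hδ hr)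
    have hpow : (0:ℝ) < zα ^ (-m₂) := Real.rpow_pos_of_pos hzα0 _
    have hB : m₁ * (α * δ - 1) / δ * zα ^ (-m₂) + (m₁ - 1) / r * zα ^ (1 - m₂) < 0 := by
      rw [hrw]
      have : m₁ * (α * δ - 1) / δ * zα ^ (-m₂) + (m₁ - 1) / r * (zα * zα ^ (-m₂))
          = (m₁ * (α * δ - 1) / δ + (m₁ - 1) / r * zα) * zα ^ (-m₂) := by ring
      rw [this]
      exact mul_neg_of_neg_of_pos hinner hpow
    have hA : (1 - (γ - 1) / γ) / ((m₁ - m₂) * (m₂ - (γ - 1) / γ)) < 0 :=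
      div_neg_of_pos_of_neg h1γpos
        (mul_neg_of_pos_of_neg (by linarith) (by linarith))
    exact mul_pos (mul_pos_of_neg_of_neg hA hB) (Real.rpow_pos_of_pos hh _)
  · -- C5 positive
    unfold C5
    have hrw : zβ ^ (1 - m₁) = zβ * zβ ^ (-m₁) := by
      rw [show (1:ℝ) - m₁ = 1 + (-m₁) by ring, Real.rpow_add hzβpos, Real.rpow_one]
    have hnum : 0 < m₂ * (β * δ + 1) * r + (1 - m₂) * zβ * δ := by
      have h1 : (1 - m₂) * δ * (1 + β * δ) ≤ (1 - m₂) * δ * zβ := by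
        have : (0:ℝ) ≤ (1 - m₂) * δ := mul_nonneg (by linarith) hδ.le
        exact mul_le_mul_of_nonneg_left hzβ' this
      have h2 : 0 < (1 + β * δ) * (δ * (1 - m₂) + r * m₂) := mul_pos hβδ key2
      nlinarith [h1, h2]
    have hinner : 0 < m₂ * (β * δ + 1) / δ + (1 - m₂) / r * zβ := by
      have heq : m₂ * (β * δ + 1) / δ + (1 - m₂) / r * zβ
          = (m₂ * (β * δ + 1) * r + (1 - m₂) * zβ * δ) / (δ * r) := by
        field_simp
      rw [heq]
      exact div_pos hnum (mul_pos hδ hr)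
    have hpow : (0:ℝ) < zβ ^ (-m₁) := Real.rpow_pos_of_pos hzβpos _
    have hB : 0 < m₂ * (β * δ + 1) / δ * zβ ^ (-m₁) + (1 - m₂) / r * zβ ^ (1 - m₁) := by
      rw [hrw]
      have : m₂ * (β * δ + 1) / δ * zβ ^ (-m₁) + (1 - m₂) / r * (zβ * zβ ^ (-m₁))
          = (m₂ * (β * δ + 1) / δ + (1 - m₂) / r * zβ) * zβ ^ (-m₁) := by ring
      rw [this]
      exact mul_pos hinner hpow
    have hA : 0 < (1 - (γ - 1) / γ) / ((m₁ - m₂) * (m₁ - (γ - 1) / γ)) :=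
      div_pos h1γpos (mul_pos (by linarith) (by linarith))
    exact mul_pos (mul_pos hA hB) (Real.rpow_pos_of_pos hh _)
end
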